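/- arXiv:2312.08845 — 3 statements merged into one kernel-verified Lean document; each statement's English description precedes it below -/
import Mathlib

section
/- Let Rad be a root system in a finite-dimensional real inner product space V, let t be an involution of Rad, let v be an S-chamber vector for t, and let β ∈ Rad with t(β) = −β. Then s_β(v) is again a regular vector and is an S-chamber vector for t. -/
open scoped RealInnerProductSpace

namespace PaperRS

variable {V : Type*} [NormedAddCommGroup V] [InnerProductSpace ℝ V]

/-- The reflection in a root `α`. -/
noncomputable def reflRoot (α x : V) : V := x - (2 * ⟪x, α⟫ / ⟪α, α⟫) • α

/-- `Rad` is a (reduced, crystallographic) root system in `V`. -/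
structure IsRootSystem (Rad : Set V) : Prop where
  finite : Rad.Finite
  nonzero : ∀ α ∈ Rad, α ≠ 0
  spanning : Submodule.span ℝ Rad = ⊤
  integral : ∀ α ∈ Rad, ∀ β ∈ Rad, ∃ n : ℤ, 2 * ⟪β, α⟫ / ⟪α, α⟫ = (n : ℝ)
  reflMem : ∀ α ∈ Rad, ∀ β ∈ Rad, reflRoot α β ∈ Rad
  reduced : ∀ α ∈ Rad, ∀ c : ℝ, c • α ∈ Rad → c = 1 ∨ c = -1

/-- Irreducibility: `Rad` is not the union of two nonempty mutually orthogonal subsets. -/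
def IsIrreducible (Rad : Set V) : Prop :=
  ¬ ∃ R₁ R₂ : Set V, R₁.Nonempty ∧ R₂.Nonempty ∧ Rad = R₁ ∪ R₂ ∧
      ∀ α ∈ R₁, ∀ β ∈ R₂, ⟪α, β⟫ = 0

/-- An involution of the root system `Rad`: an orthogonal linear automorphism `t` of `V`
with `t(Rad) = Rad` and `t ∘ t = id`. -/
structure IsInvolution (Rad : Set V) (t : V ≃ₗᵢ[ℝ] V) : Prop where
  maps : (⇑t) '' Rad = Rad
  invol : ∀ x : V, t (t x) = x

/-- Two roots are strongly orthogonal if neither their sum nor their difference is a root. -/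
def StronglyOrthogonal (Rad : Set V) (α β : V) : Prop :=
  α ≠ β ∧ α ≠ -β ∧ α + β ∉ Rad ∧ α - β ∉ Rad

/-- A vector is regular for `Rad` if it is orthogonal to no root. -/
def IsRegular (Rad : Set V) (v : V) : Prop := ∀ α ∈ Rad, ⟪α, v⟫ ≠ 0

/-- The positive roots determined by a regular vector `v`. -/
def posRoots (Rad : Set V) (v : V) : Set V := {α ∈ Rad | 0 < ⟪α, v⟫}

/-- The base of simple roots determined by a regular vector `v`: the positive roots which
are not sums of two positive roots. -/
def simpleBase (Rad : Set V) (v : V) : Set V :=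
  {α ∈ posRoots Rad v | ¬ ∃ β ∈ posRoots Rad v, ∃ γ ∈ posRoots Rad v, α = β + γ}

/-- A regular vector `v` is an S-chamber vector for an involution `t` if
`(α,v)·(t α,v) > 0` for every complex root `α` (i.e. every root with `t α ≠ ±α`). -/
def IsSChamber (Rad : Set V) (t : V ≃ₗᵢ[ℝ] V) (v : V) : Prop :=
  IsRegular Rad v ∧
    ∀ α ∈ Rad, t α ≠ α → t α ≠ -α → 0 < ⟪α, v⟫ * ⟪t α, v⟫

/-- `P ⊆ Rad` is parabolic if `P ∪ (-P) = Rad` and `P` is closed under root addition. -/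
def IsParabolic (Rad P : Set V) : Prop :=
  P ⊆ Rad ∧ (∀ α ∈ Rad, α ∈ P ∨ -α ∈ P) ∧
    ∀ α ∈ P, ∀ β ∈ P, α + β ∈ Rad → α + β ∈ P

/-- Composition `s_{β 0} ∘ s_{β 1} ∘ ⋯ ∘ s_{β (r-1)}` of the reflections in the roots
`β 0, …, β (r-1)`. -/
noncomputable def reflComp : (r : ℕ) → (Fin r → V) → V → V
  | 0, _ => id
  | r + 1, β => reflRoot (β 0) ∘ reflComp r (fun i => β i.succ)

lemma inner_reflRoot_right (β α v : V) :
    ⟪α, reflRoot β v⟫ = ⟪reflRoot β α, v⟫ := by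
  simp only [reflRoot, inner_sub_left, inner_sub_right, real_inner_smul_left,
    real_inner_smul_right]
  rw [real_inner_comm β v]
  ring

lemma reflRoot_invol {β : V} (hβ : ⟪β, β⟫ ≠ 0) (x : V) :
    reflRoot β (reflRoot β x) = x := by
  simp only [reflRoot, inner_sub_left, real_inner_smul_left]
  have : (2 * (⟪x, β⟫ - 2 * ⟪x, β⟫ / ⟪β, β⟫ * ⟪β, β⟫) / ⟪β, β⟫)
      = -(2 * ⟪x, β⟫ / ⟪β, β⟫) := by field_simp; ring
  rw [this]
  module

lemma reflRoot_neg (β x : V) : reflRoot β (-x) = - reflRoot β x := by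
  simp only [reflRoot, inner_neg_left]
  rw [show (2 * -⟪x, β⟫ / ⟪β, β⟫) = -(2 * ⟪x, β⟫ / ⟪β, β⟫) by ring]
  module

lemma t_reflRoot (t : V ≃ₗᵢ[ℝ] V) {β : V} (hβim : t β = -β) (x : V) :
    reflRoot β (t x) = t (reflRoot β x) := by
  have h1 : ⟪t x, β⟫ = -⟪x, β⟫ := by
    have h0 : ⟪t x, t β⟫ = ⟪x, β⟫ := t.inner_map_map x β
    rw [hβim, inner_neg_right] at h0
    linarith
  simp only [reflRoot, map_sub, LinearIsometryEquiv.map_smul, hβim, h1]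
  rw [show (2 * -⟪x, β⟫ / ⟪β, β⟫) = -(2 * ⟪x, β⟫ / ⟪β, β⟫) by ring]
  module

/-- reflecting an S-chamber vector for `t` in an imaginary root yields again
an S-chamber vector for `t` (in particular a regular vector). -/
theorem stmt4 {V : Type*} [NormedAddCommGroup V] [InnerProductSpace ℝ V]
    [FiniteDimensional ℝ V] (Rad : Set V) (hRS : IsRootSystem Rad)
    (t : V ≃ₗᵢ[ℝ] V) (ht : IsInvolution Rad t) (v : V) (hv : IsSChamber Rad t v)
    (β : V) (hβ : β ∈ Rad) (hβim : t β = -β) :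
    IsSChamber Rad t (reflRoot β v) := by
  have hβ0 : ⟪β, β⟫ ≠ 0 := by
    exact fun h => hRS.nonzero β hβ (inner_self_eq_zero.mp h)
  obtain ⟨hreg, hcham⟩ := hv
  constructor
  · intro α hα
    rw [inner_reflRoot_right]
    exact hreg _ (hRS.reflMem β hβ α hα)
  · intro α hα h1 h2
    rw [inner_reflRoot_right, inner_reflRoot_right]
    have hα' : reflRoot β α ∈ Rad := hRS.reflMem β hβ α hα
    have hkey : t (reflRoot β α) = reflRoot β (t α) := (t_reflRoot t hβim α).symm
    have h1' : t (reflRoot β α) ≠ reflRoot β α := by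
      rw [hkey]; intro h
      have h' := congrArg (reflRoot β) h
      rw [reflRoot_invol hβ0, reflRoot_invol hβ0] at h'
      exact h1 h'
    have h2' : t (reflRoot β α) ≠ -(reflRoot β α) := by
      rw [hkey]; intro h
      have h' := congrArg (reflRoot β) h
      rw [reflRoot_invol hβ0, reflRoot_neg, reflRoot_invol hβ0] at h'
      exact h2 h'
    have := hcham _ hα' h1' h2'
    rwa [hkey] at this

end PaperRS
end

section
/- Let Rad be a root system in a finite-dimensional real inner product space V, let t be an involution of Rad, and let v be a regular vector. Then the following are equivalent: (i) (α,v)·(t(α),v) > 0 for every root α with t(α) ≠ ±α; (ii) (t(α),v) > 0 for every simple root α ∈ B(v) with t(α) ≠ ±α. -/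
open scoped RealInnerProductSpace

namespace PaperRS

variable {V : Type*} [NormedAddCommGroup V] [InnerProductSpace ℝ V]

/-!
Put `w = v + t v`, so that `⟪x, w⟫ = ⟪x, v⟫ + ⟪t x, v⟫`. Under (ii) every simple root `β`
has `⟪β, w⟫ ≥ 0`, with equality only if `t β = -β`, and this property is stable under sums,
hence holds for all positive roots. If a positive root `α` with `t α ≠ ±α` had `⟪t α, v⟫ < 0`,
then `-t α` would be a positive root with `⟪-t α, w⟫ = -⟪α, w⟫ < 0`, a contradiction.
Replacing `α` by `-α` handles the negative roots.
-/

theorem IsRootSystem.neg_mem {Rad : Set V} (hRS : IsRootSystem Rad) {α : V} (hα : α ∈ Rad) :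
    -α ∈ Rad := by
  have hαα : ⟪α, α⟫ ≠ 0 := inner_self_ne_zero.2 (hRS.nonzero α hα)
  have hrefl : reflRoot α α = -α := by
    rw [reflRoot, mul_div_assoc, div_self hαα, mul_one, two_smul]
    abel
  simpa [hrefl] using hRS.reflMem α hα α hα

theorem IsInvolution.map_mem {Rad : Set V} {t : V ≃ₗᵢ[ℝ] V} (ht : IsInvolution Rad t)
    {α : V} (hα : α ∈ Rad) : t α ∈ Rad :=
  ht.maps ▸ Set.mem_image_of_mem t hα

theorem inner_add_map_self {t : V ≃ₗᵢ[ℝ] V} (ht : ∀ x, t (t x) = x) (x v : V) :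
    ⟪x, v + t v⟫ = ⟪x, v⟫ + ⟪t x, v⟫ := by
  rw [inner_add_right, ← t.inner_map_map x (t v), ht]

theorem posRoots_subset_closure_simpleBase {Rad : Set V} (hfin : Rad.Finite) (v : V) :
    posRoots Rad v ⊆ AddSubmonoid.closure (simpleBase Rad v) := by
  have hwf : (posRoots Rad v).WellFoundedOn (fun x y => ⟪x, v⟫ < ⟪y, v⟫) :=
    Set.wellFoundedOn_image.1 ((hfin.subset fun _ hx => hx.1).image _).wellFoundedOn
  intro α hα
  refine hwf.induction hα fun β hβ ih => ?_
  by_cases hs : β ∈ simpleBase Rad v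
  · exact AddSubmonoid.subset_closure hs
  obtain ⟨γ, hγ, δ, hδ, rfl⟩ : ∃ γ ∈ posRoots Rad v, ∃ δ ∈ posRoots Rad v, β = γ + δ :=
    not_not.1 fun h => hs ⟨hβ, h⟩
  have hsum : ⟪γ + δ, v⟫ = ⟪γ, v⟫ + ⟪δ, v⟫ := inner_add_left _ _ _
  exact add_mem (ih γ hγ (by linarith [hδ.2])) (ih δ hδ (by linarith [hγ.2]))

def antiFixedCone {F : Type*} [FunLike F V V] [AddMonoidHomClass F V V] (t : F) (w : V) :
    AddSubmonoid V where
  carrier := {x | 0 ≤ ⟪x, w⟫ ∧ (⟪x, w⟫ = 0 → t x = -x)}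
  zero_mem' := by simp
  add_mem' := by
    rintro x y ⟨hx, hx0⟩ ⟨hy, hy0⟩
    simp only [Set.mem_ofPred_eq, inner_add_left] at *
    refine ⟨add_nonneg hx hy, fun hxy => ?_⟩
    rw [map_add, hx0 (by linarith), hy0 (by linarith), neg_add]

theorem posRoots_subset_antiFixedCone {Rad : Set V} (hfin : Rad.Finite)
    {t : V ≃ₗᵢ[ℝ] V} (ht : ∀ x, t (t x) = x) {v : V}
    (hsimple : ∀ α ∈ simpleBase Rad v, t α ≠ α → t α ≠ -α → 0 < ⟪t α, v⟫) :
    posRoots Rad v ⊆ antiFixedCone t (v + t v) := by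
  refine (posRoots_subset_closure_simpleBase hfin v).trans (AddSubmonoid.closure_le.2 ?_)
  intro β hβ
  have hβv : 0 < ⟪β, v⟫ := hβ.1.2
  show 0 ≤ ⟪β, v + t v⟫ ∧ (⟪β, v + t v⟫ = 0 → t β = -β)
  rw [inner_add_map_self ht]
  by_cases hanti : t β = -β
  · rw [hanti, inner_neg_left]
    exact ⟨by simp, fun _ => rfl⟩
  have htβ : 0 < ⟪t β, v⟫ := by
    by_cases hfix : t β = β
    · rwa [hfix]
    · exact hsimple β hβ hfix hanti
  exact ⟨by linarith, fun h => absurd h (by linarith)⟩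

theorem inner_map_pos_of_mem_posRoots {Rad : Set V} (hRS : IsRootSystem Rad)
    {t : V ≃ₗᵢ[ℝ] V} (ht : IsInvolution Rad t) {v : V} (hreg : IsRegular Rad v)
    (hsimple : ∀ α ∈ simpleBase Rad v, t α ≠ α → t α ≠ -α → 0 < ⟪t α, v⟫)
    ⦃α : V⦄ (hα : α ∈ posRoots Rad v) (hanti : t α ≠ -α) : 0 < ⟪t α, v⟫ := by
  have hcone := posRoots_subset_antiFixedCone hRS.finite ht.invol hsimple
  have hαw : 0 < ⟪α, v + t v⟫ := (hcone hα).1.lt_of_ne fun h => hanti ((hcone hα).2 h.symm)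
  have htα : t α ∈ Rad := ht.map_mem hα.1
  refine (hreg _ htα).lt_or_gt.resolve_left fun hneg => ?_
  have hmem : -t α ∈ posRoots Rad v := ⟨hRS.neg_mem htα, by rw [inner_neg_left]; linarith⟩
  have hmemw := (hcone hmem).1
  rw [inner_add_map_self ht.invol] at hαw hmemw
  rw [map_neg, ht.invol, inner_neg_left, inner_neg_left] at hmemw
  linarith

theorem stmt6_general {V : Type*} [NormedAddCommGroup V] [InnerProductSpace ℝ V]
    (Rad : Set V) (hRS : IsRootSystem Rad)
    (t : V ≃ₗᵢ[ℝ] V) (ht : IsInvolution Rad t) (v : V) (hreg : IsRegular Rad v) :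
    (∀ α ∈ Rad, t α ≠ α → t α ≠ -α → 0 < ⟪α, v⟫ * ⟪t α, v⟫) ↔
      (∀ α ∈ simpleBase Rad v, t α ≠ α → t α ≠ -α → 0 < ⟪t α, v⟫) := by
  refine ⟨fun h α hα hfix hanti => pos_of_mul_pos_right (h α hα.1.1 hfix hanti) hα.1.2.le,
    fun hsimple α hα _ hanti => ?_⟩
  have hpos := inner_map_pos_of_mem_posRoots hRS ht hreg hsimple
  rcases (hreg α hα).lt_or_gt with hαv | hαv
  · have hanti' : t (-α) ≠ -(-α) := by
      simpa [neg_eq_iff_eq_neg] using hanti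
    have htαv := hpos ⟨hRS.neg_mem hα, by rw [inner_neg_left]; linarith⟩ hanti'
    rw [map_neg, inner_neg_left, neg_pos] at htαv
    exact mul_pos_of_neg_of_neg hαv htαv
  · exact mul_pos hαv (hpos ⟨hα, hαv⟩ hanti)

/-- the S-chamber condition holds for all complex roots iff it holds on the
complex simple roots, in the form `(t α, v) > 0`. -/
theorem stmt6 {V : Type*} [NormedAddCommGroup V] [InnerProductSpace ℝ V]
    [FiniteDimensional ℝ V] (Rad : Set V) (hRS : IsRootSystem Rad)
    (t : V ≃ₗᵢ[ℝ] V) (ht : IsInvolution Rad t) (v : V) (hreg : IsRegular Rad v) :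
    (∀ α ∈ Rad, t α ≠ α → t α ≠ -α → 0 < ⟪α, v⟫ * ⟪t α, v⟫) ↔
      (∀ α ∈ simpleBase Rad v, t α ≠ α → t α ≠ -α → 0 < ⟪t α, v⟫) :=
  stmt6_general Rad hRS t ht v hreg

end PaperRS
end

section
/- Let Rad be an irreducible root system in a finite-dimensional real inner product space V, let v be a regular vector, and let B(v) be the corresponding base of simple roots. If H₁ and H₂ are nonzero vectors in the closed dual chamber {H ∈ V : (α, H) ≥ 0 for all α ∈ B(v)}, then (H₁, H₂) > 0. -/
/-!
Simple roots are pairwise obtuse and span `V`, so a vector `H₂` of the closed dual chamber is a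
nonnegative combination `∑ c α • α` of simple roots, and `⟪H₁, H₂⟫ = ∑ c α ⟪α, H₁⟫ ≥ 0`. If this
vanishes, the support of `c` is orthogonal to the remaining simple roots, hence (Dynkin diagram
connected, by irreducibility) empty or everything; the first case gives `H₂ = 0`, the second
`H₁ ⊥ V`.
-/

open scoped RealInnerProductSpace

namespace PaperRS

variable {V : Type*} [NormedAddCommGroup V] [InnerProductSpace ℝ V]

open Submodule

/-- For a base of simple roots this says that its Dynkin diagram is connected. -/
def IsIndecomposable (B : Set V) : Prop :=
  ∀ T ⊆ B, (∀ α ∈ T, ∀ β ∈ B \ T, ⟪α, β⟫ = 0) → T = ∅ ∨ T = B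

lemma eq_zero_of_span_eq_top_of_forall_inner_eq_zero {s : Set V} (hs : span ℝ s = ⊤) {x : V}
    (hx : ∀ α ∈ s, ⟪α, x⟫ = 0) : x = 0 := by
  have hle : span ℝ s ≤ (ℝ ∙ x)ᗮ :=
    span_le.2 fun α hα => mem_orthogonal_singleton_iff_inner_left.2 (hx α hα)
  rw [hs] at hle
  exact inner_self_eq_zero.1 (mem_orthogonal_singleton_iff_inner_left.1 (hle trivial))

section Obtuse

variable {B : Finset V} (hobt : ∀ α ∈ B, ∀ β ∈ B, α ≠ β → ⟪α, β⟫ ≤ 0)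
include hobt

lemma inner_sum_smul_sum_smul_nonpos {a b : V → ℝ} (ha : ∀ α ∈ B, 0 ≤ a α)
    (hb : ∀ α ∈ B, 0 ≤ b α) (hab : ∀ α ∈ B, a α * b α = 0) :
    ⟪∑ α ∈ B, a α • α, ∑ β ∈ B, b β • β⟫ ≤ 0 := by
  simp only [sum_inner, inner_sum, real_inner_smul_left, real_inner_smul_right]
  refine Finset.sum_nonpos fun β hβ => Finset.sum_nonpos fun α hα => ?_
  obtain rfl | hne := eq_or_ne α β
  · rw [← mul_assoc, mul_comm (b α), hab α hα, zero_mul]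
  · exact mul_nonpos_of_nonneg_of_nonpos (hb β hβ)
      (mul_nonpos_of_nonneg_of_nonpos (ha α hα) (hobt α hα β hβ hne))

lemma exists_nonneg_coeffs_of_forall_inner_nonneg (hspan : span ℝ (B : Set V) = ⊤) {H : V}
    (hH : ∀ α ∈ B, 0 ≤ ⟪α, H⟫) :
    ∃ c : V → ℝ, (∀ α ∈ B, 0 ≤ c α) ∧ H = ∑ α ∈ B, c α • α := by
  obtain ⟨f, -, hf⟩ := mem_span_finset.1 (hspan ▸ mem_top : H ∈ span ℝ (B : Set V))
  set P := ∑ α ∈ B, (f α)⁺ • α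
  set N := ∑ α ∈ B, (f α)⁻ • α
  have hHPN : H = P - N := by
    simp only [P, N, ← hf, ← Finset.sum_sub_distrib, ← sub_smul, posPart_sub_negPart]
  have hNH : 0 ≤ ⟪N, H⟫ := by
    simp only [N, sum_inner, real_inner_smul_left]
    exact Finset.sum_nonneg fun α hα => mul_nonneg (negPart_nonneg _) (hH α hα)
  have hNP : ⟪N, P⟫ ≤ 0 := by
    refine inner_sum_smul_sum_smul_nonpos hobt (fun _ _ => negPart_nonneg _)
      (fun _ _ => posPart_nonneg _) fun α _ => ?_
    rcases le_total (f α) 0 with h | h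
    · rw [posPart_eq_zero.2 h, mul_zero]
    · rw [negPart_eq_zero.2 h, zero_mul]
  -- `⟪N, N⟫ = ⟪N, P⟫ - ⟪N, H⟫ ≤ 0` forces the negative part to vanish.
  have hN : N = 0 := by
    refine real_inner_self_nonpos.1 ?_
    have hNN : ⟪N, N⟫ = ⟪N, P⟫ - ⟪N, H⟫ := by rw [hHPN, inner_sub_right]; ring
    linarith
  exact ⟨fun α => (f α)⁺, fun _ _ => posPart_nonneg _, by rw [hHPN, hN, sub_zero]⟩

lemma coeff_mul_inner_eq_zero {c : V → ℝ} (hc : ∀ α ∈ B, 0 ≤ c α) {β : V} (hβ : β ∈ B)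
    (hcβ : c β = 0) (hH : 0 ≤ ⟪β, ∑ α ∈ B, c α • α⟫) : ∀ α ∈ B, c α * ⟪β, α⟫ = 0 := by
  have hterm : ∀ α ∈ B, c α * ⟪β, α⟫ ≤ 0 := by
    intro α hα
    obtain rfl | hne := eq_or_ne α β
    · rw [hcβ, zero_mul]
    · exact mul_nonpos_of_nonneg_of_nonpos (hc α hα) (hobt β hβ α hα hne.symm)
  simp only [inner_sum, real_inner_smul_right] at hH
  exact (Finset.sum_eq_zero_iff_of_nonpos hterm).1 (le_antisymm (Finset.sum_nonpos hterm) hH)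

theorem inner_pos_of_isIndecomposable (hspan : span ℝ (B : Set V) = ⊤)
    (hB : IsIndecomposable (B : Set V)) {H₁ H₂ : V} (h₁ : H₁ ≠ 0) (h₂ : H₂ ≠ 0)
    (hc₁ : ∀ α ∈ B, 0 ≤ ⟪α, H₁⟫) (hc₂ : ∀ α ∈ B, 0 ≤ ⟪α, H₂⟫) : 0 < ⟪H₁, H₂⟫ := by
  obtain ⟨c, hc, rfl⟩ := exists_nonneg_coeffs_of_forall_inner_nonneg hobt hspan hc₂
  have hexp : ⟪H₁, ∑ α ∈ B, c α • α⟫ = ∑ α ∈ B, c α * ⟪α, H₁⟫ := by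
    simp only [inner_sum, real_inner_smul_right, real_inner_comm]
  have hterm : ∀ α ∈ B, 0 ≤ c α * ⟪α, H₁⟫ := fun α hα => mul_nonneg (hc α hα) (hc₁ α hα)
  rw [hexp]
  refine (Finset.sum_nonneg hterm).lt_of_ne fun h0 => ?_
  have hzero := (Finset.sum_eq_zero_iff_of_nonneg hterm).1 h0.symm
  set T : Set V := {α ∈ (B : Set V) | 0 < c α}
  have horth : ∀ α ∈ T, ∀ β ∈ (B : Set V) \ T, ⟪α, β⟫ = 0 := by
    rintro α ⟨hαB, hcα⟩ β ⟨hβB, hβT⟩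
    have hcβ : c β = 0 := le_antisymm (not_lt.1 fun h => hβT ⟨hβB, h⟩) (hc β hβB)
    have := coeff_mul_inner_eq_zero hobt hc hβB hcβ (hc₂ β hβB) α hαB
    rw [real_inner_comm]
    exact (mul_eq_zero.1 this).resolve_left hcα.ne'
  rcases hB T (Set.sep_subset _ _) horth with hT | hT
  · refine h₂ (Finset.sum_eq_zero fun α hα => ?_)
    have hcα : c α = 0 := le_antisymm (not_lt.1 fun h => hT.subset ⟨hα, h⟩) (hc α hα)
    rw [hcα, zero_smul]
  · refine h₁ (eq_zero_of_span_eq_top_of_forall_inner_eq_zero hspan fun α hα => ?_)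
    have hcα : 0 < c α := (hT.symm.subset hα).2
    exact (mul_eq_zero.1 (hzero α hα)).resolve_left hcα.ne'

end Obtuse

lemma reflRoot_self {α : V} (hα : α ≠ 0) : reflRoot α α = -α := by
  rw [reflRoot, mul_div_assoc, div_self (inner_self_ne_zero.2 hα), mul_one, two_smul]
  abel

lemma reflRoot_add_of_inner_eq_zero {β γ : V} (hβ : β ≠ 0) (h : ⟪γ, β⟫ = 0) :
    reflRoot β (β + γ) = γ - β := by
  rw [reflRoot, inner_add_left, h, add_zero, mul_div_assoc,
    div_self (inner_self_ne_zero.2 hβ), mul_one, two_smul]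
  abel

lemma exists_add_of_not_mem_simpleBase {Rad : Set V} {v α : V} (hα : α ∈ posRoots Rad v)
    (hs : α ∉ simpleBase Rad v) :
    ∃ β ∈ posRoots Rad v, ∃ γ ∈ posRoots Rad v, α = β + γ ∧
      ⟪β, v⟫ < ⟪α, v⟫ ∧ ⟪γ, v⟫ < ⟪α, v⟫ := by
  obtain ⟨β, hβ, γ, hγ, rfl⟩ := not_not.1 fun h => hs ⟨hα, h⟩
  refine ⟨β, hβ, γ, hγ, rfl, ?_, ?_⟩ <;> rw [inner_add_left] <;> linarith [hβ.2, hγ.2]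

namespace IsRootSystem

variable {Rad : Set V} (hRS : IsRootSystem Rad)
include hRS

lemma neg_mem_s14 {α : V} (hα : α ∈ Rad) : -α ∈ Rad :=
  reflRoot_self (hRS.nonzero α hα) ▸ hRS.reflMem α hα α hα

lemma sub_mem_of_add_mem_of_inner_eq_zero {β γ : V} (hβ : β ∈ Rad) (hβγ : β + γ ∈ Rad)
    (h : ⟪γ, β⟫ = 0) : γ - β ∈ Rad :=
  reflRoot_add_of_inner_eq_zero (hRS.nonzero β hβ) h ▸ hRS.reflMem β hβ _ hβγ

lemma inner_lt_norm_mul_norm {α β : V} (hα : α ∈ Rad) (hβ : β ∈ Rad) (hne : α ≠ β) :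
    ⟪α, β⟫ < ‖α‖ * ‖β‖ := by
  have hnα : 0 < ‖α‖ := norm_pos_iff.2 (hRS.nonzero α hα)
  have hnβ : 0 < ‖β‖ := norm_pos_iff.2 (hRS.nonzero β hβ)
  refine inner_lt_norm_mul_iff_real.2 fun heq => ?_
  have hαβ : α = (‖α‖ / ‖β‖) • β := by
    rw [div_eq_inv_mul, ← smul_smul, ← heq, smul_smul, inv_mul_cancel₀ hnβ.ne', one_smul]
  rcases hRS.reduced β hβ _ (hαβ ▸ hα) with h | h
  · exact hne (by rw [hαβ, h, one_smul])
  · linarith [div_pos hnα hnβ]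

/-- Two roots at an acute angle have Cartan integers `n, m > 0` with `n m < 4`, so one of
them is `1` and the corresponding reflection produces `±(α - β)`. -/
lemma sub_mem_of_inner_pos {α β : V} (hα : α ∈ Rad) (hβ : β ∈ Rad) (hne : α ≠ β)
    (hpos : 0 < ⟪α, β⟫) : α - β ∈ Rad := by
  obtain ⟨n, hn⟩ := hRS.integral β hβ α hα
  obtain ⟨m, hm⟩ := hRS.integral α hα β hβ
  rw [real_inner_comm] at hm
  have hαα := real_inner_self_pos.2 (hRS.nonzero α hα)
  have hββ := real_inner_self_pos.2 (hRS.nonzero β hβ)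
  have hCS : ⟪α, β⟫ * ⟪α, β⟫ < ⟪α, α⟫ * ⟪β, β⟫ := by
    have h := hRS.inner_lt_norm_mul_norm hα hβ hne
    rw [real_inner_self_eq_norm_mul_norm, real_inner_self_eq_norm_mul_norm]
    nlinarith
  have hn0 : 0 < n := by rw [← Int.cast_pos (R := ℝ), ← hn]; positivity
  have hm0 : 0 < m := by rw [← Int.cast_pos (R := ℝ), ← hm]; positivity
  have hnm : n * m < 4 := by
    suffices (n : ℝ) * m < 4 by exact_mod_cast this
    rw [← hn, ← hm, div_mul_div_comm, div_lt_iff₀ (by positivity)]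
    nlinarith
  have hone : n = 1 ∨ m = 1 := by
    by_contra! h
    nlinarith [(by omega : 2 ≤ n), (by omega : 2 ≤ m)]
  rcases hone with h | h
  · have := hRS.reflMem β hβ α hα
    rwa [reflRoot, hn, h, Int.cast_one, one_smul] at this
  · have := hRS.neg_mem_s14 (hRS.reflMem α hα β hβ)
    rwa [reflRoot, real_inner_comm, hm, h, Int.cast_one, one_smul, neg_sub] at this

variable {v : V}

lemma mem_posRoots_or_neg_mem (hreg : IsRegular Rad v) {α : V} (hα : α ∈ Rad) :
    α ∈ posRoots Rad v ∨ -α ∈ posRoots Rad v := by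
  rcases (hreg α hα).lt_or_gt with h | h
  · exact Or.inr ⟨hRS.neg_mem_s14 hα, by rw [inner_neg_left]; linarith⟩
  · exact Or.inl ⟨hα, h⟩

lemma forall_mem_of_forall_posRoots (hreg : IsRegular Rad v) {P : V → Prop}
    (hpos : ∀ α ∈ posRoots Rad v, P α) (hneg : ∀ α, P (-α) → P α) : ∀ α ∈ Rad, P α :=
  fun α hα => (hRS.mem_posRoots_or_neg_mem hreg hα).elim (hpos α) (hneg α ∘ hpos (-α))

lemma posRoots_induction {P : V → Prop}
    (h : ∀ α ∈ posRoots Rad v, (∀ β ∈ posRoots Rad v, ⟪β, v⟫ < ⟪α, v⟫ → P β) → P α) :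
    ∀ α ∈ posRoots Rad v, P α := by
  have hwf : (posRoots Rad v).WellFoundedOn (Function.onFun (· < ·) fun α => ⟪α, v⟫) :=
    Set.wellFoundedOn_image.1 ((hRS.finite.subset fun _ h => h.1).image _).wellFoundedOn
  exact fun α hα => hwf.induction hα h

lemma inner_nonpos_of_mem_simpleBase (hreg : IsRegular Rad v) {α β : V}
    (hα : α ∈ simpleBase Rad v) (hβ : β ∈ simpleBase Rad v) (hne : α ≠ β) : ⟪α, β⟫ ≤ 0 := by
  by_contra! hpos
  rcases hRS.mem_posRoots_or_neg_mem hreg (hRS.sub_mem_of_inner_pos hα.1.1 hβ.1.1 hne hpos)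
    with h | h
  · exact hα.2 ⟨α - β, h, β, hβ.1, by abel⟩
  · exact hβ.2 ⟨-(α - β), h, α, hα.1, by abel⟩

lemma span_simpleBase (hreg : IsRegular Rad v) : span ℝ (simpleBase Rad v) = ⊤ := by
  have hpos : ∀ α ∈ posRoots Rad v, α ∈ span ℝ (simpleBase Rad v) := by
    refine hRS.posRoots_induction fun α hα ih => ?_
    by_cases hs : α ∈ simpleBase Rad v
    · exact subset_span hs
    · obtain ⟨β, hβ, γ, hγ, rfl, hβα, hγα⟩ := exists_add_of_not_mem_simpleBase hα hs
      exact add_mem (ih β hβ hβα) (ih γ hγ hγα)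
  rw [eq_top_iff, ← hRS.spanning, span_le]
  exact hRS.forall_mem_of_forall_posRoots hreg hpos fun α h => neg_mem_iff.1 h

/-- A positive root `β + γ` with `β, γ` in the two different spans would make
`γ - β = s_β (β + γ)` a root of smaller height lying in neither span. -/
lemma mem_span_or_mem_span_of_simpleBase_eq_union (hreg : IsRegular Rad v) {B₁ B₂ : Set V}
    (hU : B₁ ∪ B₂ = simpleBase Rad v) (hO : ∀ a ∈ B₁, ∀ b ∈ B₂, ⟪a, b⟫ = 0) :
    ∀ α ∈ Rad, α ∈ span ℝ B₁ ∨ α ∈ span ℝ B₂ := by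
  have hortho : span ℝ B₁ ⟂ span ℝ B₂ := isOrtho_span.2 fun a ha b hb => hO a ha b hb
  have hdisj := disjoint_def.1 hortho.disjoint
  have hneg : ∀ α, (-α ∈ span ℝ B₁ ∨ -α ∈ span ℝ B₂) → (α ∈ span ℝ B₁ ∨ α ∈ span ℝ B₂) := by
    simp only [neg_mem_iff, imp_self, implies_true]
  refine hRS.forall_mem_of_forall_posRoots hreg (hRS.posRoots_induction fun α hα ih => ?_) hneg
  by_cases hs : α ∈ simpleBase Rad v
  · rw [← hU] at hs
    exact hs.imp (fun h => subset_span h) fun h => subset_span h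
  obtain ⟨β, hβ, γ, hγ, rfl, hβα, hγα⟩ := exists_add_of_not_mem_simpleBase hα hs
  have hmixed : ∀ β' γ', β' ∈ posRoots Rad v → γ' ∈ posRoots Rad v → β' + γ' = β + γ →
      β' ∈ span ℝ B₁ → γ' ∈ span ℝ B₂ → False := by
    intro β' γ' hβ' hγ' hsum hβ'₁ hγ'₂
    have hγβ : γ' - β' ∈ Rad := hRS.sub_mem_of_add_mem_of_inner_eq_zero hβ'.1 (hsum ▸ hα.1)
      (hortho.symm.inner_eq hγ'₂ hβ'₁)
    have hγβ' : γ' - β' ∈ span ℝ B₁ ∨ γ' - β' ∈ span ℝ B₂ := by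
      rcases hRS.mem_posRoots_or_neg_mem hreg hγβ with h | h
      · refine ih _ h ?_
        rw [← hsum, inner_add_left, inner_sub_left]; linarith [hβ'.2]
      · refine hneg _ (ih _ h ?_)
        rw [← hsum, inner_add_left, inner_neg_left, inner_sub_left]; linarith [hγ'.2]
    rcases hγβ' with h | h
    · exact hRS.nonzero γ' hγ'.1 (hdisj γ' (by simpa using add_mem h hβ'₁) hγ'₂)
    · exact hRS.nonzero β' hβ'.1 (hdisj β' hβ'₁ (by simpa using sub_mem hγ'₂ h))
  rcases ih β hβ hβα with h₁ | h₁ <;> rcases ih γ hγ hγα with h₂ | h₂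
  · exact Or.inl (add_mem h₁ h₂)
  · exact (hmixed β γ hβ hγ rfl h₁ h₂).elim
  · exact (hmixed γ β hγ hβ (add_comm γ β) h₂ h₁).elim
  · exact Or.inr (add_mem h₁ h₂)

lemma isIndecomposable_simpleBase (hreg : IsRegular Rad v) (hirr : IsIrreducible Rad) :
    IsIndecomposable (simpleBase Rad v) := by
  intro T hT horth
  rw [or_iff_not_imp_left, ← ne_eq, ← Set.nonempty_iff_ne_empty]
  intro ⟨a, ha⟩
  refine hT.antisymm fun b hb => by_contra fun hbT => hirr ?_
  have hsplit := hRS.mem_span_or_mem_span_of_simpleBase_eq_union hreg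
    (Set.union_sdiff_cancel hT) horth
  have hortho : span ℝ T ⟂ span ℝ (simpleBase Rad v \ T) :=
    isOrtho_span.2 fun a ha b hb => horth a ha b hb
  refine ⟨Rad ∩ span ℝ T, Rad ∩ span ℝ (simpleBase Rad v \ T),
    ⟨a, (hT ha).1.1, subset_span ha⟩, ⟨b, hb.1.1, subset_span ⟨hb, hbT⟩⟩, ?_,
    fun x hx y hy => hortho.inner_eq hx.2 hy.2⟩
  ext x
  exact ⟨fun hx => (hsplit x hx).imp (⟨hx, ·⟩) (⟨hx, ·⟩), fun hx => hx.elim (·.1) (·.1)⟩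

end IsRootSystem

theorem stmt14_general {V : Type*} [NormedAddCommGroup V] [InnerProductSpace ℝ V]
    (Rad : Set V) (hRS : IsRootSystem Rad)
    (hirr : IsIrreducible Rad) (v : V) (hreg : IsRegular Rad v)
    (H₁ H₂ : V) (h₁ : H₁ ≠ 0) (h₂ : H₂ ≠ 0)
    (hc₁ : ∀ α ∈ simpleBase Rad v, 0 ≤ ⟪α, H₁⟫)
    (hc₂ : ∀ α ∈ simpleBase Rad v, 0 ≤ ⟪α, H₂⟫) :
    0 < ⟪H₁, H₂⟫ := by
  have hfin : (simpleBase Rad v).Finite := hRS.finite.subset fun _ h => h.1.1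
  obtain ⟨B, hB⟩ := hfin.exists_finset_coe
  rw [← hB] at hc₁ hc₂
  exact inner_pos_of_isIndecomposable
    (fun α hα β hβ => hRS.inner_nonpos_of_mem_simpleBase hreg (hB ▸ hα) (hB ▸ hβ))
    (hB ▸ hRS.span_simpleBase hreg) (hB ▸ hRS.isIndecomposable_simpleBase hreg hirr)
    h₁ h₂ hc₁ hc₂

/-- in an irreducible root system, two nonzero vectors of the closed dual
chamber have positive inner product. -/
theorem stmt14 {V : Type*} [NormedAddCommGroup V] [InnerProductSpace ℝ V]
    [FiniteDimensional ℝ V] (Rad : Set V) (hRS : IsRootSystem Rad)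
    (hirr : IsIrreducible Rad) (v : V) (hreg : IsRegular Rad v)
    (H₁ H₂ : V) (h₁ : H₁ ≠ 0) (h₂ : H₂ ≠ 0)
    (hc₁ : ∀ α ∈ simpleBase Rad v, 0 ≤ ⟪α, H₁⟫)
    (hc₂ : ∀ α ∈ simpleBase Rad v, 0 ≤ ⟪α, H₂⟫) :
    0 < ⟪H₁, H₂⟫ :=
  stmt14_general Rad hRS hirr v hreg H₁ H₂ h₁ h₂ hc₁ hc₂

end PaperRS
end
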